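/- arXiv:math/0703892 — 6 statements merged into one kernel-verified Lean document; each statement's English description precedes it below -/
import Mathlib

section
/- Every compact Hausdorff space M such that C(M;ℂ) is isometrically isomorphic as a complex Banach algebra to L^∞(𝕋) is non-separable as a topological space: M has no countable dense subset. -/
open Topology

open MeasureTheory in
instance : Fact (0 < 2 * Real.pi) := ⟨by positivity⟩

open MeasureTheory in
/-- `C(M, ℂ)` is isometrically isomorphic, as a complex Banach algebra, to `L^∞(𝕋)`
(realized as `Lp ℂ ∞` of the circle `ℝ/2πℤ` with Lebesgue/Haar measure): there is a
complex-linear isometric equivalence which is moreover multiplicative (hence a Banach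
algebra isomorphism). -/
def IsCMIsoLinftyCircle (M : Type*) [TopologicalSpace M] [CompactSpace M] : Prop :=
  ∃ e : C(M, ℂ) ≃ₗᵢ[ℂ] Lp ℂ ⊤ (volume : Measure (AddCircle (2 * Real.pi))),
    ∀ f g : C(M, ℂ),
      ((e (f * g) : AddCircle (2 * Real.pi) →ₘ[volume] ℂ)) = ↑(e f) * ↑(e g)

namespace Stmt3Aux

open MeasureTheory Set

noncomputable section

abbrev Circ := AddCircle (2 * Real.pi)

def indL (S : Set Circ) (hS : MeasurableSet S) : Lp ℂ ⊤ (volume : Measure Circ) :=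
  indicatorConstLp ⊤ hS (measure_ne_top _ _) 1

def arc (a b : ℝ) : Set Circ := {x | (AddCircle.equivIoc (2 * Real.pi) 0 x : ℝ) ∈ Ioc a b}

lemma arc_meas (a b : ℝ) : MeasurableSet (arc a b) := by
  have : arc a b = (AddCircle.measurableEquivIoc (2 * Real.pi) 0) ⁻¹'
      ((↑) ⁻¹' Ioc a b) := rfl
  rw [this]
  exact (AddCircle.measurableEquivIoc (2 * Real.pi) 0).measurable
    (measurableSet_Ioc.preimage measurable_subtype_coe)

lemma equivIoc_coe_mk {r : ℝ} (hr : r ∈ Ioc 0 (0 + 2 * Real.pi)) :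
    AddCircle.equivIoc (2 * Real.pi) 0 (↑r : Circ) = ⟨r, hr⟩ := by
  rw [Equiv.apply_eq_iff_eq_symm_apply]
  rfl

lemma arc_vol {a b : ℝ} : (volume : Measure Circ) (arc a b) ≤ ENNReal.ofReal (b - a) := by
  rw [AddCircle.add_projection_respects_measure (T := 2 * Real.pi) 0 (arc_meas a b)]
  refine le_trans (measure_mono ?_) (by rw [Real.volume_Ioc])
  rintro r ⟨hmem, hr⟩
  have : AddCircle.equivIoc (2 * Real.pi) 0 (↑r : Circ) = ⟨r, hr⟩ := equivIoc_coe_mk hr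
  simpa [arc, this] using hmem

variable {M : Type} [TopologicalSpace M] [CompactSpace M]
  (e : C(M, ℂ) ≃ₗᵢ[ℂ] Lp ℂ ⊤ (volume : Measure Circ))

def FF (S : Set Circ) (hS : MeasurableSet S) : C(M, ℂ) := e.symm (indL S hS)

variable (hmul : ∀ f g : C(M, ℂ),
    ((e (f * g) : Circ →ₘ[volume] ℂ)) = ↑(e f) * ↑(e g))

lemma indL_coe_mul (S T' : Set Circ) (hS : MeasurableSet S) (hT : MeasurableSet T') :
    (↑(indL S hS) : Circ →ₘ[volume] ℂ) * ↑(indL T' hT) = ↑(indL (S ∩ T') (hS.inter hT)) := by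
  apply AEEqFun.ext
  have h1 : ⇑((↑(indL S hS) : Circ →ₘ[volume] ℂ) * ↑(indL T' hT))
      =ᵐ[volume] ⇑(↑(indL S hS) : Circ →ₘ[volume] ℂ) * ⇑(↑(indL T' hT) : Circ →ₘ[volume] ℂ) :=
    AEEqFun.coeFn_mul _ _
  filter_upwards [h1, (indicatorConstLp_coeFn : ⇑(indL S hS) =ᵐ[volume] _),
    (indicatorConstLp_coeFn : ⇑(indL T' hT) =ᵐ[volume] _),
    (indicatorConstLp_coeFn : ⇑(indL (S ∩ T') (hS.inter hT)) =ᵐ[volume] _)] with x hx h2 h3 h4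
  rw [hx, Pi.mul_apply]
  simp only [indL] at h2 h3 h4 ⊢
  rw [h2, h3, h4]
  by_cases hx1 : x ∈ S <;> by_cases hx2 : x ∈ T' <;>
    simp [Set.indicator_apply, hx1, hx2]

include hmul in
lemma FF_mul (S T' : Set Circ) (hS : MeasurableSet S) (hT : MeasurableSet T') :
    FF e S hS * FF e T' hT = FF e (S ∩ T') (hS.inter hT) := by
  apply e.injective
  apply Subtype.ext
  show ((e (FF e S hS * FF e T' hT) : Circ →ₘ[volume] ℂ)) = _
  rw [hmul]
  simp only [FF, LinearIsometryEquiv.apply_symm_apply]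
  exact indL_coe_mul S T' hS hT

include hmul in
lemma FF_univ : FF e univ MeasurableSet.univ = 1 := by
  have key : ∀ g : C(M, ℂ), FF e univ MeasurableSet.univ * g = g := by
    intro g
    apply e.injective
    apply Subtype.ext
    show ((e (_ * g) : Circ →ₘ[volume] ℂ)) = _
    rw [hmul]
    simp only [FF, LinearIsometryEquiv.apply_symm_apply]
    have huniv : (↑(indL univ MeasurableSet.univ) : Circ →ₘ[volume] ℂ) = 1 := by
      apply AEEqFun.ext
      filter_upwards [(indicatorConstLp_coeFn :
        ⇑(indL univ MeasurableSet.univ) =ᵐ[volume] _),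
        (AEEqFun.coeFn_one : ⇑(1 : Circ →ₘ[volume] ℂ) =ᵐ[volume] _)] with x h1 h2
      simp only [indL] at h1 ⊢
      rw [h1, h2]
      simp
    rw [huniv, one_mul]
  have := key 1
  rwa [mul_one] at this

lemma FF_empty (hS : MeasurableSet (∅ : Set Circ)) : FF e ∅ hS = 0 := by
  have h0 : indL ∅ hS = 0 := by
    apply Lp.ext
    filter_upwards [(indicatorConstLp_coeFn : ⇑(indL ∅ hS) =ᵐ[volume] _),
      Lp.coeFn_zero ℂ ⊤ (volume : Measure Circ)] with x h1 h2
    simp only [indL] at h1 ⊢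
    rw [h1, h2]
    simp
  simp [FF, h0]

lemma lp_coeFn_sum {ι : Type*} (s : Finset ι) (f : ι → Lp ℂ ⊤ (volume : Measure Circ)) :
    ⇑(∑ i ∈ s, f i) =ᵐ[volume] fun x => ∑ i ∈ s, f i x := by
  classical
  induction s using Finset.induction_on with
  | empty =>
    simp only [Finset.sum_empty]
    exact Lp.coeFn_zero ℂ ⊤ (volume : Measure Circ)
  | insert _ _ hni ih =>
    rw [Finset.sum_insert hni]
    filter_upwards [Lp.coeFn_add _ (∑ i ∈ _, f i), ih] with x hx h2
    rw [hx]
    simp only [Pi.add_apply, h2, Finset.sum_insert hni]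

lemma indL_sum (k : ℕ) (P : ℕ → Set Circ) (meas : ∀ i, MeasurableSet (P i))
    (hpt : ∀ x, ∑ i ∈ Finset.range k, (P i).indicator (fun _ => (1 : ℂ)) x = 1) :
    ∑ i ∈ Finset.range k, indL (P i) (meas i) = indL univ MeasurableSet.univ := by
  apply Lp.ext
  filter_upwards [lp_coeFn_sum (Finset.range k) (fun i => indL (P i) (meas i)),
    ae_all_iff.2 (fun i : ℕ => (indicatorConstLp_coeFn :
      ⇑(indL (P i) (meas i)) =ᵐ[volume] _)),
    (indicatorConstLp_coeFn : ⇑(indL univ MeasurableSet.univ) =ᵐ[volume] _)] with x h1 h2 h3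
  rw [h1]
  simp only [indL] at h2 h3 ⊢
  rw [h3, Finset.sum_congr rfl fun i _ => h2 i, hpt x]
  simp

lemma exists_unique_Ioc {k : ℕ} {c y : ℝ} (hc : 0 < c) (hy : y ∈ Ioc 0 (k * c)) :
    ∃! i : ℕ, i ∈ Finset.range k ∧ y ∈ Ioc (i * c) ((i + 1) * c) := by
  obtain ⟨hy0, hyk⟩ := hy
  set n := ⌈y / c⌉₊ with hn
  have hyc : 0 < y / c := div_pos hy0 hc
  have hn1 : 1 ≤ n := Nat.one_le_ceil_iff.mpr hyc
  have hle : y / c ≤ n := Nat.le_ceil _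
  have hlt : (n : ℝ) - 1 < y / c := by
    have := Nat.ceil_lt_add_one (le_of_lt hyc)
    linarith
  have hcast : ((n - 1 : ℕ) : ℝ) = (n : ℝ) - 1 := by
    push_cast [Nat.cast_sub hn1]; ring
  have hyk' : y / c ≤ k := by rw [div_le_iff₀ hc]; linarith
  refine ⟨n - 1, ⟨?_, ?_, ?_⟩, ?_⟩
  · rw [Finset.mem_range]
    have : ((n - 1 : ℕ) : ℝ) < (k : ℝ) := by rw [hcast]; linarith
    exact_mod_cast this
  · rw [hcast]
    rw [← lt_div_iff₀ hc]; exact hlt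
  · rw [hcast]
    have hy' : y ≤ (n : ℝ) * c := by rw [← div_le_iff₀ hc]; exact hle
    linarith [hy']
  · rintro j ⟨hjk, hj1, hj2⟩
    have hjn : (j : ℝ) < n := by
      have : (j : ℝ) < y / c := by rw [lt_div_iff₀ hc]; exact hj1
      linarith
    have hnj : (n : ℝ) ≤ j + 1 := by
      have : y / c ≤ (j : ℝ) + 1 := by rw [div_le_iff₀ hc]; linarith
      exact_mod_cast Nat.ceil_le.mpr (by exact_mod_cast this)
    have h1 : j < n := by exact_mod_cast hjn
    have h2 : n ≤ j + 1 := by exact_mod_cast hnj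
    omega

lemma sum_indicator_arcs (k : ℕ) (c : ℝ) (hc : 0 < c) (hkc : (k : ℝ) * c = 2 * Real.pi)
    (x : Circ) :
    ∑ i ∈ Finset.range k,
      (arc (i * c) ((i + 1) * c)).indicator (fun _ => (1 : ℂ)) x = 1 := by
  set y : ℝ := (AddCircle.equivIoc (2 * Real.pi) 0 x : ℝ) with hy
  have hyIoc : y ∈ Ioc 0 ((k : ℝ) * c) := by
    have h2 := (AddCircle.equivIoc (2 * Real.pi) 0 x).2
    have h21 := h2.1
    have h22 := h2.2
    exact ⟨h21, by linarith⟩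
  have hmem : ∀ a b : ℝ, x ∈ arc a b ↔ y ∈ Ioc a b := fun a b => Iff.rfl
  obtain ⟨i₀, ⟨hi₀k, hi₀⟩, huniq⟩ := exists_unique_Ioc hc hyIoc
  rw [Finset.sum_eq_single_of_mem i₀ hi₀k]
  · exact Set.indicator_of_mem ((hmem _ _).mpr hi₀) _
  · intro j hjk hne
    apply Set.indicator_of_notMem
    intro hxj
    exact hne (huniq j ⟨hjk, (hmem _ _).mp hxj⟩)

end

end Stmt3Aux

open MeasureTheory Set Stmt3Aux in
/-- A compact Hausdorff space `M` with `C(M;ℂ)` isometrically algebra-isomorphic to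
`L^∞(𝕋)` is not separable. -/
theorem stmt3 (M : Type) [TopologicalSpace M] [CompactSpace M] [T2Space M]
    (hM : IsCMIsoLinftyCircle M) : ¬TopologicalSpace.SeparableSpace M := by
  intro hsep
  obtain ⟨e, hmul⟩ := hM
  have hvoluniv : (volume : Measure Circ) univ ≠ 0 := by
    rw [AddCircle.measure_univ]
    exact (ENNReal.ofReal_pos.2 (by positivity)).ne'
  have hind_ne : ∀ (S : Set Circ) (hS : MeasurableSet S),
      (volume : Measure Circ) S ≠ 0 → indL S hS ≠ 0 := by
    intro S hS hvol h
    have hnorm : ‖indL S hS‖ = ‖(1 : ℂ)‖ := norm_indicatorConstLp_top hvol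
    rw [h] at hnorm
    simp at hnorm
  -- M is nonempty
  haveI : Nonempty M := by
    by_contra hne
    haveI : IsEmpty M := not_nonempty_iff.mp hne
    have hsub : (FF e univ MeasurableSet.univ : C(M, ℂ)) = 0 :=
      ContinuousMap.ext fun x => (IsEmpty.false x).elim
    have : e.symm (indL univ MeasurableSet.univ) = e.symm 0 := by
      rw [map_zero]; exact hsub
    exact hind_ne univ MeasurableSet.univ hvoluniv (e.symm.injective this)
  obtain ⟨u, hu⟩ := TopologicalSpace.exists_dense_seq M
  -- for each n, choose a small arc on which the transferred function is nonzero at `u n`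
  have harc : ∀ n : ℕ, ∃ S : Set Circ, ∃ hS : MeasurableSet S,
      (volume : Measure Circ) S ≤ ENNReal.ofReal (2 * Real.pi / 2 ^ (n + 2)) ∧
      FF e S hS (u n) ≠ 0 := by
    intro n
    set c : ℝ := 2 * Real.pi / 2 ^ (n + 2) with hcdef
    have hc : 0 < c := by positivity
    have hkc : ((2 ^ (n + 2) : ℕ) : ℝ) * c = 2 * Real.pi := by
      rw [hcdef]
      push_cast
      field_simp
    have hsum : ∑ i ∈ Finset.range (2 ^ (n + 2)),
        FF e (arc (i * c) ((i + 1) * c)) (arc_meas _ _) = 1 := by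
      have hlp := indL_sum (2 ^ (n + 2)) (fun i => arc (i * c) ((i + 1) * c))
        (fun i => arc_meas _ _) (fun x => sum_indicator_arcs _ c hc hkc x)
      calc ∑ i ∈ Finset.range (2 ^ (n + 2)),
            FF e (arc (i * c) ((i + 1) * c)) (arc_meas _ _)
          = e.symm (∑ i ∈ Finset.range (2 ^ (n + 2)),
              indL (arc (i * c) ((i + 1) * c)) (arc_meas _ _)) := by
            simp [FF, map_sum]
        _ = e.symm (indL univ MeasurableSet.univ) := by rw [hlp]
        _ = 1 := FF_univ e hmul
    have hval : ∑ i ∈ Finset.range (2 ^ (n + 2)),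
        FF e (arc (i * c) ((i + 1) * c)) (arc_meas _ _) (u n) = 1 := by
      have := congrArg (fun f : C(M, ℂ) => f (u n)) hsum
      simpa using this
    obtain ⟨i, hi, hne⟩ := Finset.exists_ne_zero_of_sum_ne_zero
      (hval ▸ one_ne_zero)
    refine ⟨arc (i * c) ((i + 1) * c), arc_meas _ _, ?_, hne⟩
    refine le_trans arc_vol (le_of_eq ?_)
    congr 1
    ring
  choose I hImeas hIvol hIne using harc
  set B : Set Circ := ⋃ n, I n with hB
  have hBmeas : MeasurableSet B := MeasurableSet.iUnion hImeas
  -- the union of the small arcs has measure at most π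
  have hfun : ∀ n : ℕ, 2 * Real.pi / 2 ^ (n + 2) = (Real.pi / 2) * (1 / 2 : ℝ) ^ n := by
    intro n
    have h2 : (2 : ℝ) ^ (n + 2) = 2 ^ n * 4 := by rw [pow_add]; norm_num
    have h3 : ((1 / 2 : ℝ)) ^ n = 1 / 2 ^ n := by
      rw [div_pow]; norm_num
    rw [h2, h3]
    have : (2 : ℝ) ^ n ≠ 0 := by positivity
    field_simp
    ring
  have hsummable : Summable (fun n : ℕ => 2 * Real.pi / 2 ^ (n + 2)) := by
    apply Summable.congr (((summable_geometric_of_lt_one (by norm_num)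
      (by norm_num : (1 / 2 : ℝ) < 1))).mul_left (Real.pi / 2))
    intro n
    rw [hfun n]
  have htsum : ∑' n : ℕ, 2 * Real.pi / 2 ^ (n + 2) = Real.pi := by
    calc ∑' n : ℕ, 2 * Real.pi / 2 ^ (n + 2)
        = ∑' n : ℕ, (Real.pi / 2) * (1 / 2 : ℝ) ^ n := by
          exact tsum_congr hfun
      _ = (Real.pi / 2) * ∑' n : ℕ, (1 / 2 : ℝ) ^ n := tsum_mul_left
      _ = Real.pi := by
          rw [tsum_geometric_of_lt_one (by norm_num) (by norm_num)]
          norm_num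
  have hBvol : (volume : Measure Circ) B ≤ ENNReal.ofReal Real.pi := by
    refine le_trans (measure_iUnion_le _) ?_
    calc ∑' n, (volume : Measure Circ) (I n)
        ≤ ∑' n, ENNReal.ofReal (2 * Real.pi / 2 ^ (n + 2)) := ENNReal.tsum_le_tsum hIvol
      _ = ENNReal.ofReal (∑' n, 2 * Real.pi / 2 ^ (n + 2)) :=
          (ENNReal.ofReal_tsum_of_nonneg (fun n => by positivity) hsummable).symm
      _ = ENNReal.ofReal Real.pi := by rw [htsum]
  -- the complement has positive measure
  have hAvol : (volume : Measure Circ) Bᶜ ≠ 0 := by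
    rw [measure_compl hBmeas (measure_ne_top _ _)]
    have hlt : (volume : Measure Circ) B < (volume : Measure Circ) univ := by
      rw [AddCircle.measure_univ]
      refine lt_of_le_of_lt hBvol ?_
      rw [ENNReal.ofReal_lt_ofReal_iff (by positivity)]
      linarith [Real.pi_pos]
    exact (tsub_pos_of_lt hlt).ne'
  -- the transferred function of the complement is nonzero somewhere
  have hFFA : FF e Bᶜ hBmeas.compl ≠ 0 := by
    intro h
    have h0 : e.symm (indL Bᶜ hBmeas.compl) = e.symm 0 := by
      rw [map_zero]; exact h
    exact hind_ne Bᶜ hBmeas.compl hAvol (e.symm.injective h0)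
  obtain ⟨x₀, hx₀⟩ : ∃ x, FF e Bᶜ hBmeas.compl x ≠ 0 := by
    by_contra h
    push_neg at h
    exact hFFA (ContinuousMap.ext fun x => h x)
  have hopen : IsOpen {x : M | FF e Bᶜ hBmeas.compl x ≠ 0} :=
    isOpen_compl_singleton.preimage (FF e Bᶜ hBmeas.compl).continuous
  obtain ⟨n, hn⟩ := hu.exists_mem_open hopen ⟨x₀, hx₀⟩
  -- contradiction at `u n`
  have hdisj : Bᶜ ∩ I n = (∅ : Set Circ) := by
    apply eq_empty_iff_forall_notMem.mpr
    rintro x ⟨hxc, hxI⟩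
    exact hxc (mem_iUnion.mpr ⟨n, hxI⟩)
  have hzero : FF e Bᶜ hBmeas.compl * FF e (I n) (hImeas n) = 0 := by
    rw [FF_mul e hmul]
    have haux : ∀ (S : Set Circ) (hS : MeasurableSet S), S = ∅ → FF e S hS = 0 := by
      intro S hS hSe
      subst hSe
      exact FF_empty e hS
    exact haux _ _ hdisj
  have heval := congrArg (fun f : C(M, ℂ) => f (u n)) hzero
  simp only [ContinuousMap.mul_apply, ContinuousMap.zero_apply] at heval
  exact mul_ne_zero hn (hIne n) heval
end

section
/- Let X be a compact Hausdorff space which is the topological sum X = Y ⊕ X₁ ⊕ X₂ ⊕ X₃, where X₁, X₂, X₃ are nonempty and connected. Let e : ℕ → Y be an injective map, let φ be a homeomorphism from X∖{e(1)} onto X with φ(e(n+1)) = e(n) for all n ∈ ℕ, let a : X∖{e(1)} → ℝ be continuous with |a| ≡ 1, and let Δ be a continuous linear functional on C(X;ℝ) with ‖Δ‖ ≤ 1. Suppose the map T : C(X;ℝ) → C(X;ℝ) given by (Tf)(x) = a(x)·f(φ(x)) for x ≠ e(1) and (Tf)(e(1)) = Δ(f) is a linear isometry whose range has codimension 1, and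 that φ(X_i) = X_i for i = 1, 2, 3. Then T is not an isometric shift: ⋂_{n≥1} Tⁿ(C(X;ℝ)) ≠ {0}. -/
open Topology

section

variable (Y X₁ X₂ X₃ : Type)

local notation "XX" => Y ⊕ X₁ ⊕ X₂ ⊕ X₃

/-- If `X = Y ⊕ X₁ ⊕ X₂ ⊕ X₃` with `X₁, X₂, X₃` nonempty and connected, and `T` is a
codimension-1 linear isometry of type-I form (with respect to an injective sequence
`e : ℕ → Y`, here 0-indexed: `e 0` plays the rôle of `𝐧₁`) whose homeomorphism preserves
each `Xᵢ`, then `T` is not an isometric shift: `⋂_{n≥1} Tⁿ(C(X;ℝ)) ≠ {0}`. -/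
theorem stmt9
    [TopologicalSpace Y] [CompactSpace Y] [T2Space Y]
    [TopologicalSpace X₁] [CompactSpace X₁] [T2Space X₁] [ConnectedSpace X₁]
    [TopologicalSpace X₂] [CompactSpace X₂] [T2Space X₂] [ConnectedSpace X₂]
    [TopologicalSpace X₃] [CompactSpace X₃] [T2Space X₃] [ConnectedSpace X₃]
    (e : ℕ → Y) (he : Function.Injective e)
    (φ : {x : XX // x ≠ Sum.inl (e 0)} ≃ₜ XX)
    (hφe : ∀ (n : ℕ) (h : (Sum.inl (e (n + 1)) : XX) ≠ Sum.inl (e 0)),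
      φ ⟨Sum.inl (e (n + 1)), h⟩ = Sum.inl (e n))
    (a : C({x : XX // x ≠ Sum.inl (e 0)}, ℝ)) (ha : ∀ x, |a x| = 1)
    (Δ : C(XX, ℝ) →L[ℝ] ℝ) (hΔ : ‖Δ‖ ≤ 1)
    (T : C(XX, ℝ) →L[ℝ] C(XX, ℝ))
    (hT1 : ∀ (f : C(XX, ℝ)) (x : {x : XX // x ≠ Sum.inl (e 0)}), T f x.1 = a x * f (φ x))
    (hT2 : ∀ f : C(XX, ℝ), T f (Sum.inl (e 0)) = Δ f)
    (hiso : ∀ f : C(XX, ℝ), ‖T f‖ = ‖f‖)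
    (hcodim : Module.rank ℝ (C(XX, ℝ) ⧸ LinearMap.range (T : C(XX, ℝ) →ₗ[ℝ] C(XX, ℝ))) = 1)
    (hφ1 : ⇑φ '' {x | ∃ z : X₁, x.1 = Sum.inr (Sum.inl z)}
      = {y : XX | ∃ z : X₁, y = Sum.inr (Sum.inl z)})
    (hφ2 : ⇑φ '' {x | ∃ z : X₂, x.1 = Sum.inr (Sum.inr (Sum.inl z))}
      = {y : XX | ∃ z : X₂, y = Sum.inr (Sum.inr (Sum.inl z))})
    (hφ3 : ⇑φ '' {x | ∃ z : X₃, x.1 = Sum.inr (Sum.inr (Sum.inr z))}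
      = {y : XX | ∃ z : X₃, y = Sum.inr (Sum.inr (Sum.inr z))}) :
    (⋂ m : ℕ, Set.range ((⇑T)^[m + 1])) ≠ {0} := by
  classical
  obtain ⟨p₁⟩ : Nonempty X₁ := inferInstance
  obtain ⟨p₂⟩ : Nonempty X₂ := inferInstance
  obtain ⟨p₃⟩ : Nonempty X₃ := inferInstance
  have hne₁ : ∀ z : X₁, (Sum.inr (Sum.inl z) : XX) ≠ Sum.inl (e 0) := fun z => by simp
  have hne₂ : ∀ z : X₂, (Sum.inr (Sum.inr (Sum.inl z)) : XX) ≠ Sum.inl (e 0) := fun z => by simp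
  have hne₃ : ∀ z : X₃, (Sum.inr (Sum.inr (Sum.inr z)) : XX) ≠ Sum.inl (e 0) := fun z => by simp
  -- the three restrictions of a
  set F₁ : X₁ → ℝ := fun z => a ⟨Sum.inr (Sum.inl z), hne₁ z⟩ with hF₁def
  set F₂ : X₂ → ℝ := fun z => a ⟨Sum.inr (Sum.inr (Sum.inl z)), hne₂ z⟩ with hF₂def
  set F₃ : X₃ → ℝ := fun z => a ⟨Sum.inr (Sum.inr (Sum.inr z)), hne₃ z⟩ with hF₃def
  have hFc₁ : Continuous F₁ :=
    a.continuous.comp ((continuous_inr.comp continuous_inl).subtype_mk hne₁)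
  have hFc₂ : Continuous F₂ :=
    a.continuous.comp ((continuous_inr.comp (continuous_inr.comp continuous_inl)).subtype_mk hne₂)
  have hFc₃ : Continuous F₃ :=
    a.continuous.comp ((continuous_inr.comp (continuous_inr.comp continuous_inr)).subtype_mk hne₃)
  have habs : ∀ x, a x = 1 ∨ a x = -1 := fun x => (abs_eq (by norm_num)).mp (ha x)
  have habs1 : ∀ x, a x * a x = 1 := fun x => by rw [← abs_mul_abs_self, ha x, one_mul]
  -- constancy of each Fᵢ, by the intermediate value theorem
  have hconst₁ : ∀ z z' : X₁, F₁ z = F₁ z' := by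
    intro z z'
    by_contra hne
    have h1 := habs ⟨Sum.inr (Sum.inl z), hne₁ z⟩
    have h2 := habs ⟨Sum.inr (Sum.inl z'), hne₁ z'⟩
    have hI : ∃ w : X₁, F₁ w = 0 := by
      rcases h1 with h1 | h1 <;> rcases h2 with h2 | h2
      · exact absurd (h1.trans h2.symm) hne
      · exact intermediate_value_univ (α := ℝ) z' z hFc₁
          (by rw [show F₁ z' = -1 from h2, show F₁ z = 1 from h1]; constructor <;> norm_num)
      · exact intermediate_value_univ (α := ℝ) z z' hFc₁
          (by rw [show F₁ z = -1 from h1, show F₁ z' = 1 from h2]; constructor <;> norm_num)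
      · exact absurd (h1.trans h2.symm) hne
    obtain ⟨w, hw⟩ := hI
    have h0 : |F₁ w| = 1 := ha _
    rw [hw] at h0
    norm_num at h0
  have hconst₂ : ∀ z z' : X₂, F₂ z = F₂ z' := by
    intro z z'
    by_contra hne
    have h1 := habs ⟨Sum.inr (Sum.inr (Sum.inl z)), hne₂ z⟩
    have h2 := habs ⟨Sum.inr (Sum.inr (Sum.inl z')), hne₂ z'⟩
    have hI : ∃ w : X₂, F₂ w = 0 := by
      rcases h1 with h1 | h1 <;> rcases h2 with h2 | h2
      · exact absurd (h1.trans h2.symm) hne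
      · exact intermediate_value_univ (α := ℝ) z' z hFc₂
          (by rw [show F₂ z' = -1 from h2, show F₂ z = 1 from h1]; constructor <;> norm_num)
      · exact intermediate_value_univ (α := ℝ) z z' hFc₂
          (by rw [show F₂ z = -1 from h1, show F₂ z' = 1 from h2]; constructor <;> norm_num)
      · exact absurd (h1.trans h2.symm) hne
    obtain ⟨w, hw⟩ := hI
    have h0 : |F₂ w| = 1 := ha _
    rw [hw] at h0
    norm_num at h0
  have hconst₃ : ∀ z z' : X₃, F₃ z = F₃ z' := by
    intro z z'
    by_contra hne
    have h1 := habs ⟨Sum.inr (Sum.inr (Sum.inr z)), hne₃ z⟩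
    have h2 := habs ⟨Sum.inr (Sum.inr (Sum.inr z')), hne₃ z'⟩
    have hI : ∃ w : X₃, F₃ w = 0 := by
      rcases h1 with h1 | h1 <;> rcases h2 with h2 | h2
      · exact absurd (h1.trans h2.symm) hne
      · exact intermediate_value_univ (α := ℝ) z' z hFc₃
          (by rw [show F₃ z' = -1 from h2, show F₃ z = 1 from h1]; constructor <;> norm_num)
      · exact intermediate_value_univ (α := ℝ) z z' hFc₃
          (by rw [show F₃ z = -1 from h1, show F₃ z' = 1 from h2]; constructor <;> norm_num)
      · exact absurd (h1.trans h2.symm) hne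
    obtain ⟨w, hw⟩ := hI
    have h0 : |F₃ w| = 1 := ha _
    rw [hw] at h0
    norm_num at h0
  set c₁ : ℝ := F₁ p₁ with hc₁def
  set c₂ : ℝ := F₂ p₂ with hc₂def
  set c₃ : ℝ := F₃ p₃ with hc₃def
  have hc₁sq : c₁ * c₁ = 1 := habs1 _
  have hc₂sq : c₂ * c₂ = 1 := habs1 _
  have hc₃sq : c₃ * c₃ = 1 := habs1 _
  -- φ preserves each piece
  have hφ₁' : ∀ z : X₁, ∃ z' : X₁,
      φ ⟨Sum.inr (Sum.inl z), hne₁ z⟩ = Sum.inr (Sum.inl z') := by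
    intro z
    have hm := Set.mem_image_of_mem (⇑φ)
      (show (⟨Sum.inr (Sum.inl z), hne₁ z⟩ : {x : XX // x ≠ Sum.inl (e 0)}) ∈
        {x : {x : XX // x ≠ Sum.inl (e 0)} | ∃ w : X₁, x.1 = Sum.inr (Sum.inl w)} from ⟨z, rfl⟩)
    rw [hφ1] at hm
    exact hm
  have hφ₂' : ∀ z : X₂, ∃ z' : X₂,
      φ ⟨Sum.inr (Sum.inr (Sum.inl z)), hne₂ z⟩ = Sum.inr (Sum.inr (Sum.inl z')) := by
    intro z
    have hm := Set.mem_image_of_mem (⇑φ)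
      (show (⟨Sum.inr (Sum.inr (Sum.inl z)), hne₂ z⟩ : {x : XX // x ≠ Sum.inl (e 0)}) ∈
        {x : {x : XX // x ≠ Sum.inl (e 0)} | ∃ w : X₂, x.1 = Sum.inr (Sum.inr (Sum.inl w))} from
          ⟨z, rfl⟩)
    rw [hφ2] at hm
    exact hm
  have hφ₃' : ∀ z : X₃, ∃ z' : X₃,
      φ ⟨Sum.inr (Sum.inr (Sum.inr z)), hne₃ z⟩ = Sum.inr (Sum.inr (Sum.inr z')) := by
    intro z
    have hm := Set.mem_image_of_mem (⇑φ)
      (show (⟨Sum.inr (Sum.inr (Sum.inr z)), hne₃ z⟩ : {x : XX // x ≠ Sum.inl (e 0)}) ∈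
        {x : {x : XX // x ≠ Sum.inl (e 0)} | ∃ w : X₃, x.1 = Sum.inr (Sum.inr (Sum.inr w))} from
          ⟨z, rfl⟩)
    rw [hφ3] at hm
    exact hm
  have hφY : ∀ (y : Y) (h : (Sum.inl y : XX) ≠ Sum.inl (e 0)),
      ∃ y' : Y, φ ⟨Sum.inl y, h⟩ = Sum.inl y' := by
    intro y h
    rcases hq : (φ ⟨Sum.inl y, h⟩ : XX) with y' | z | z | z
    · exact ⟨y', rfl⟩
    · exfalso
      have hm : (Sum.inr (Sum.inl z) : XX) ∈
          ⇑φ '' {x | ∃ w : X₁, x.1 = Sum.inr (Sum.inl w)} := by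
        rw [hφ1]; exact ⟨z, rfl⟩
      obtain ⟨x', hx'S, hfx⟩ := hm
      have hxe : x' = ⟨Sum.inl y, h⟩ := φ.injective (hfx.trans hq.symm)
      obtain ⟨z', hz'⟩ := hx'S
      rw [hxe] at hz'
      simp at hz'
    · exfalso
      have hm : (Sum.inr (Sum.inr (Sum.inl z)) : XX) ∈
          ⇑φ '' {x | ∃ w : X₂, x.1 = Sum.inr (Sum.inr (Sum.inl w))} := by
        rw [hφ2]; exact ⟨z, rfl⟩
      obtain ⟨x', hx'S, hfx⟩ := hm
      have hxe : x' = ⟨Sum.inl y, h⟩ := φ.injective (hfx.trans hq.symm)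
      obtain ⟨z', hz'⟩ := hx'S
      rw [hxe] at hz'
      simp at hz'
    · exfalso
      have hm : (Sum.inr (Sum.inr (Sum.inr z)) : XX) ∈
          ⇑φ '' {x | ∃ w : X₃, x.1 = Sum.inr (Sum.inr (Sum.inr w))} := by
        rw [hφ3]; exact ⟨z, rfl⟩
      obtain ⟨x', hx'S, hfx⟩ := hm
      have hxe : x' = ⟨Sum.inl y, h⟩ := φ.injective (hfx.trans hq.symm)
      obtain ⟨z', hz'⟩ := hx'S
      rw [hxe] at hz'
      simp at hz'
  -- the 3-parameter family of functions constant on each Xᵢ and 0 on Y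
  set mk : ℝ → ℝ → ℝ → C(XX, ℝ) := fun s t u =>
    ⟨Sum.elim (fun _ => (0:ℝ)) (Sum.elim (fun _ => s) (Sum.elim (fun _ => t) (fun _ => u))),
      continuous_const.sumElim (continuous_const.sumElim
        (continuous_const.sumElim continuous_const))⟩ with hmkdef
  have hmk_add : ∀ s t u s' t' u',
      mk (s + s') (t + t') (u + u') = mk s t u + mk s' t' u' := by
    intro s t u s' t' u'
    ext x
    rcases x with y | z | z | z <;> simp [hmkdef]
  have hmk_smul : ∀ (r s t u : ℝ), mk (r * s) (r * t) (r * u) = r • mk s t u := by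
    intro r s t u
    ext x
    rcases x with y | z | z | z <;> simp [hmkdef]
  -- choose the coefficients killing Δ
  set L : (ℝ × ℝ × ℝ) →ₗ[ℝ] ℝ × ℝ :=
    { toFun := fun v => (Δ (mk v.1 v.2.1 v.2.2), Δ (mk (c₁ * v.1) (c₂ * v.2.1) (c₃ * v.2.2))),
      map_add' := by
        intro v w
        simp only [Prod.fst_add, Prod.snd_add, mul_add, hmk_add, map_add, Prod.mk_add_mk]
      map_smul' := by
        intro r v
        simp only [Prod.smul_fst, Prod.smul_snd, smul_eq_mul, RingHom.id_apply,
          mul_left_comm, hmk_smul, map_smul, Prod.smul_mk] } with hLdef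
  have hker : LinearMap.ker L ≠ ⊥ := by
    apply LinearMap.ker_ne_bot_of_finrank_lt (f := L)
    simp [Module.finrank_prod, Module.finrank_self]
  obtain ⟨α, hαmem, hα0⟩ := (Submodule.ne_bot_iff _).mp hker
  have hLα : L α = 0 := LinearMap.mem_ker.mp hαmem
  set f : C(XX, ℝ) := mk α.1 α.2.1 α.2.2 with hfdef
  set g : C(XX, ℝ) := mk (c₁ * α.1) (c₂ * α.2.1) (c₃ * α.2.2) with hgdef
  have hDf : Δ f = 0 := congrArg Prod.fst hLα
  have hDg : Δ g = 0 := congrArg Prod.snd hLα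
  have hTf : T f = g := by
    ext x
    rcases x with y | z | z | z
    · by_cases hy : (Sum.inl y : XX) = Sum.inl (e 0)
      · rw [hy, hT2 f, hDf]
        simp [hgdef, hmkdef]
      · obtain ⟨y', hy'⟩ := hφY y hy
        have h := hT1 f ⟨Sum.inl y, hy⟩
        rw [hy'] at h
        refine h.trans ?_
        simp [hfdef, hgdef, hmkdef]
    · obtain ⟨z', hz'⟩ := hφ₁' z
      have h := hT1 f ⟨Sum.inr (Sum.inl z), hne₁ z⟩
      rw [hz'] at h
      refine h.trans ?_
      have hc : a ⟨Sum.inr (Sum.inl z), hne₁ z⟩ = c₁ := hconst₁ z p₁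
      rw [hc]
      simp [hfdef, hgdef, hmkdef]
    · obtain ⟨z', hz'⟩ := hφ₂' z
      have h := hT1 f ⟨Sum.inr (Sum.inr (Sum.inl z)), hne₂ z⟩
      rw [hz'] at h
      refine h.trans ?_
      have hc : a ⟨Sum.inr (Sum.inr (Sum.inl z)), hne₂ z⟩ = c₂ := hconst₂ z p₂
      rw [hc]
      simp [hfdef, hgdef, hmkdef]
    · obtain ⟨z', hz'⟩ := hφ₃' z
      have h := hT1 f ⟨Sum.inr (Sum.inr (Sum.inr z)), hne₃ z⟩
      rw [hz'] at h
      refine h.trans ?_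
      have hc : a ⟨Sum.inr (Sum.inr (Sum.inr z)), hne₃ z⟩ = c₃ := hconst₃ z p₃
      rw [hc]
      simp [hfdef, hgdef, hmkdef]
  have hTg : T g = f := by
    ext x
    rcases x with y | z | z | z
    · by_cases hy : (Sum.inl y : XX) = Sum.inl (e 0)
      · rw [hy, hT2 g, hDg]
        simp [hfdef, hmkdef]
      · obtain ⟨y', hy'⟩ := hφY y hy
        have h := hT1 g ⟨Sum.inl y, hy⟩
        rw [hy'] at h
        refine h.trans ?_
        simp [hfdef, hgdef, hmkdef]
    · obtain ⟨z', hz'⟩ := hφ₁' z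
      have h := hT1 g ⟨Sum.inr (Sum.inl z), hne₁ z⟩
      rw [hz'] at h
      refine h.trans ?_
      have hc : a ⟨Sum.inr (Sum.inl z), hne₁ z⟩ = c₁ := hconst₁ z p₁
      rw [hc]
      simp only [hfdef, hgdef, hmkdef]
      show c₁ * (c₁ * α.1) = α.1
      rw [← mul_assoc, hc₁sq, one_mul]
    · obtain ⟨z', hz'⟩ := hφ₂' z
      have h := hT1 g ⟨Sum.inr (Sum.inr (Sum.inl z)), hne₂ z⟩
      rw [hz'] at h
      refine h.trans ?_
      have hc : a ⟨Sum.inr (Sum.inr (Sum.inl z)), hne₂ z⟩ = c₂ := hconst₂ z p₂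
      rw [hc]
      simp only [hfdef, hgdef, hmkdef]
      show c₂ * (c₂ * α.2.1) = α.2.1
      rw [← mul_assoc, hc₂sq, one_mul]
    · obtain ⟨z', hz'⟩ := hφ₃' z
      have h := hT1 g ⟨Sum.inr (Sum.inr (Sum.inr z)), hne₃ z⟩
      rw [hz'] at h
      refine h.trans ?_
      have hc : a ⟨Sum.inr (Sum.inr (Sum.inr z)), hne₃ z⟩ = c₃ := hconst₃ z p₃
      rw [hc]
      simp only [hfdef, hgdef, hmkdef]
      show c₃ * (c₃ * α.2.2) = α.2.2
      rw [← mul_assoc, hc₃sq, one_mul]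
  -- iteration
  have hiter : ∀ k, (⇑T)^[2 * k] f = f := by
    intro k
    induction k with
    | zero => rfl
    | succ n ih =>
      have h2 : 2 * (n + 1) = 2 * n + 1 + 1 := by ring
      rw [h2, Function.iterate_succ_apply, hTf, Function.iterate_succ_apply, hTg, ih]
  have hfmem : ∀ m : ℕ, f ∈ Set.range ((⇑T)^[m + 1]) := by
    intro m
    rcases Nat.even_or_odd (m + 1) with ⟨k, hk⟩ | ⟨k, hk⟩
    · refine ⟨f, ?_⟩
      rw [hk]
      have := hiter k
      rwa [two_mul] at this
    · refine ⟨g, ?_⟩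
      rw [hk]
      refine (Function.iterate_succ_apply (⇑T) (2 * k) g).trans ?_
      rw [hTg]
      exact hiter k
  -- f ≠ 0
  have hfne : f ≠ 0 := by
    intro h0
    apply hα0
    have e1 : α.1 = 0 := by
      have h := congrArg (fun q : C(XX, ℝ) => q (Sum.inr (Sum.inl p₁))) h0
      simpa [hfdef, hmkdef] using h
    have e2 : α.2.1 = 0 := by
      have h := congrArg (fun q : C(XX, ℝ) => q (Sum.inr (Sum.inr (Sum.inl p₂)))) h0
      simpa [hfdef, hmkdef] using h
    have e3 : α.2.2 = 0 := by
      have h := congrArg (fun q : C(XX, ℝ) => q (Sum.inr (Sum.inr (Sum.inr p₃)))) h0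
      simpa [hfdef, hmkdef] using h
    rw [Prod.ext_iff]
    refine ⟨e1, ?_⟩
    rw [Prod.ext_iff]
    exact ⟨e2, e3⟩
  intro hcontra
  have hmem : f ∈ ⋂ m : ℕ, Set.range ((⇑T)^[m + 1]) := Set.mem_iInter.mpr hfmem
  rw [hcontra] at hmem
  exact hfne hmem


end
end

section
/- Let 𝕂 = ℝ or 𝕂 = ℂ, and let X be a compact Hausdorff space which is the topological sum X = X₁ ⊕ X₂ with X₁ nonempty. Let e : ℕ → X₂ be an injective map whose range is dense in X₂, and let φ be a homeomorphism from X∖{e(1)} onto X with φ(e(n+1)) = e(n) for all n ∈ ℕ. Suppose T : C(X;𝕂) → C(X;𝕂) is a linear isometry whose range has codimension 1 and which satisfies (Tf)(x) = f(φ(x)) for every f ∈ C(X;𝕂) and every x ≠ e(1). Then T has a nonzero fixed vector; in particular ⋂_{n≥1} Tⁿ(C(X;𝕂)) ≠ {0} and T is not an isometric shift. -/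
open Topology

/-- `T` is an isometric shift: an isometry whose range has codimension 1 and with
`⋂_{n≥1} Tⁿ(E) = {0}`. -/
def IsIsometricShift {𝕜 E : Type*} [RCLike 𝕜] [NormedAddCommGroup E] [NormedSpace 𝕜 E]
    (T : E →L[𝕜] E) : Prop :=
  (∀ f, ‖T f‖ = ‖f‖) ∧
    Module.rank 𝕜 (E ⧸ LinearMap.range (T : E →ₗ[𝕜] E)) = 1 ∧
    (⋂ n : ℕ, Set.range ((⇑T)^[n + 1])) = {0}

/-- If `X = X₁ ⊕ X₂` with `X₁` nonempty and `𝒩 = e(ℕ)` dense in `X₂` (`e` 0-indexed),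
then a codimension-1 linear isometry of type-I form with weight `a ≡ 1` has a nonzero
fixed vector; in particular it is not an isometric shift. -/
theorem stmt10 (𝕂 : Type) [RCLike 𝕂] (X₁ X₂ : Type)
    [TopologicalSpace X₁] [CompactSpace X₁] [T2Space X₁] [Nonempty X₁]
    [TopologicalSpace X₂] [CompactSpace X₂] [T2Space X₂]
    (e : ℕ → X₂) (he : Function.Injective e) (hdense : DenseRange e)
    (φ : {x : X₁ ⊕ X₂ // x ≠ Sum.inr (e 0)} ≃ₜ (X₁ ⊕ X₂))
    (hφe : ∀ (n : ℕ) (h : (Sum.inr (e (n + 1)) : X₁ ⊕ X₂) ≠ Sum.inr (e 0)),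
      φ ⟨Sum.inr (e (n + 1)), h⟩ = Sum.inr (e n))
    (T : C(X₁ ⊕ X₂, 𝕂) →L[𝕂] C(X₁ ⊕ X₂, 𝕂))
    (hiso : ∀ f, ‖T f‖ = ‖f‖)
    (hcodim : Module.rank 𝕂
      (C(X₁ ⊕ X₂, 𝕂) ⧸ LinearMap.range (T : C(X₁ ⊕ X₂, 𝕂) →ₗ[𝕂] C(X₁ ⊕ X₂, 𝕂))) = 1)
    (hT : ∀ (f : C(X₁ ⊕ X₂, 𝕂)) (x : {x : X₁ ⊕ X₂ // x ≠ Sum.inr (e 0)}),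
      T f x.1 = f (φ x)) :
    (∃ f : C(X₁ ⊕ X₂, 𝕂), f ≠ 0 ∧ T f = f) ∧
      (⋂ m : ℕ, Set.range ((⇑T)^[m + 1])) ≠ {0} ∧ ¬IsIsometricShift T := by
  classical
  -- basic injectivity fact
  have heK : ∀ k : ℕ, e (k + 1) ≠ e 0 := fun k h => Nat.succ_ne_zero k (he h)
  -- density of the tail of the sequence away from e 0
  have hbcl : ∀ b : X₂, b ≠ e 0 → b ∈ closure (Set.range fun k => e (k + 1)) := by
    intro b hb
    rw [mem_closure_iff]
    intro o ho hbo
    have hne : (o ∩ {e 0}ᶜ).Nonempty := ⟨b, hbo, hb⟩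
    obtain ⟨k, hk1, hk2⟩ :=
      hdense.exists_mem_open (ho.inter isClosed_singleton.isOpen_compl) hne
    cases k with
    | zero => exact absurd rfl hk2
    | succ m => exact ⟨e (m + 1), hk1, ⟨m, rfl⟩⟩
  -- φ maps X₂ ∖ {e 0} into X₂
  have hφinr : ∀ (b : X₂) (h : (Sum.inr b : X₁ ⊕ X₂) ≠ Sum.inr (e 0)),
      (φ ⟨Sum.inr b, h⟩ : X₁ ⊕ X₂) ∈ Set.range (Sum.inr : X₂ → X₁ ⊕ X₂) := by
    intro b h
    have hb : b ≠ e 0 := fun hb => h (by rw [hb])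
    set C : Set {x : X₁ ⊕ X₂ // x ≠ Sum.inr (e 0)} :=
      (fun p => φ p) ⁻¹' (Set.range (Sum.inr : X₂ → X₁ ⊕ X₂)) with hC
    have hCclosed : IsClosed C := isClosed_range_inr.preimage φ.continuous
    set R : Set (X₁ ⊕ X₂) := Sum.inr '' (Set.range fun k => e (k + 1)) with hR
    have hRS : ∀ x ∈ R, x ≠ Sum.inr (e 0) := by
      rintro x ⟨y, ⟨k, rfl⟩, rfl⟩ hx
      exact heK k (Sum.inr.inj hx)
    set D : Set {x : X₁ ⊕ X₂ // x ≠ Sum.inr (e 0)} := Subtype.val ⁻¹' R with hD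
    have hDC : D ⊆ C := by
      rintro ⟨x, hx⟩ hxD
      obtain ⟨y, ⟨k, rfl⟩, hval⟩ := hxD
      have hx' : x = Sum.inr (e (k + 1)) := hval.symm
      subst hx'
      have hk := hφe k hx
      simp only [hC, Set.mem_preimage, hk]
      exact ⟨e k, rfl⟩
    have hmem : (⟨Sum.inr b, h⟩ : {x : X₁ ⊕ X₂ // x ≠ Sum.inr (e 0)}) ∈ closure D := by
      rw [closure_subtype]
      have himg : (Subtype.val '' D : Set (X₁ ⊕ X₂)) = R := by
        rw [hD, Set.image_preimage_eq_inter_range, Subtype.range_coe_subtype]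
        exact Set.inter_eq_left.mpr (fun x hx => hRS x hx)
      rw [himg]
      have h1 : (Sum.inr b : X₁ ⊕ X₂) ∈
          Sum.inr '' closure (Set.range fun k => e (k + 1)) := ⟨b, hbcl b hb, rfl⟩
      exact image_closure_subset_closure_image continuous_inr h1
    exact hCclosed.closure_subset_iff.mpr hDC hmem
  -- φ.symm maps X₂ into X₂
  have hsymm : ∀ b : X₂,
      ((φ.symm (Sum.inr b) : {x : X₁ ⊕ X₂ // x ≠ Sum.inr (e 0)}) : X₁ ⊕ X₂) ∈
        Set.range (Sum.inr : X₂ → X₁ ⊕ X₂) := by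
    intro b
    set C : Set {x : X₁ ⊕ X₂ // x ≠ Sum.inr (e 0)} :=
      Subtype.val ⁻¹' (Set.range (Sum.inr : X₂ → X₁ ⊕ X₂)) with hC
    have hCc : IsClosed C := isClosed_range_inr.preimage continuous_subtype_val
    have hmaps : Set.MapsTo (φ.symm) (Sum.inr '' Set.range e) C := by
      rintro x ⟨y, ⟨k, rfl⟩, rfl⟩
      have h1 : (Sum.inr (e (k + 1)) : X₁ ⊕ X₂) ≠ Sum.inr (e 0) :=
        fun h => heK k (Sum.inr.inj h)
      have h2 : φ.symm (Sum.inr (e k)) = ⟨Sum.inr (e (k + 1)), h1⟩ := by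
        exact (Equiv.symm_apply_eq φ.toEquiv).mpr (hφe k h1).symm
      simp only [hC, Set.mem_preimage, h2]
      exact ⟨e (k + 1), rfl⟩
    have hmaps2 := hmaps.closure φ.symm.continuous
    have h3 : (Sum.inr b : X₁ ⊕ X₂) ∈ closure (Sum.inr '' Set.range e) :=
      image_closure_subset_closure_image continuous_inr ⟨b, hdense b, rfl⟩
    have h4 := hmaps2 h3
    rwa [hCc.closure_eq] at h4
  -- φ maps X₁ into X₁
  have hφinl : ∀ (a : X₁) (h : (Sum.inl a : X₁ ⊕ X₂) ≠ Sum.inr (e 0)),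
      (φ ⟨Sum.inl a, h⟩ : X₁ ⊕ X₂) ∈ Set.range (Sum.inl : X₁ → X₁ ⊕ X₂) := by
    intro a h
    cases hx : (φ ⟨Sum.inl a, h⟩ : X₁ ⊕ X₂) with
    | inl a' => exact ⟨a', rfl⟩
    | inr b =>
      exfalso
      have h5 : (⟨Sum.inl a, h⟩ : {x : X₁ ⊕ X₂ // x ≠ Sum.inr (e 0)})
          = φ.symm (Sum.inr b) := by
        rw [← hx, Homeomorph.symm_apply_apply]
      have h2 := hsymm b
      rw [← h5] at h2
      obtain ⟨b', hb'⟩ := h2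
      simp at hb'
  -- the two-constant functions
  have hw : ∀ c₁ c₂ : 𝕂,
      Continuous (Sum.elim (fun _ : X₁ => c₁) (fun _ : X₂ => c₂)) :=
    fun c₁ c₂ => continuous_const.sumElim continuous_const
  set w : 𝕂 → 𝕂 → C(X₁ ⊕ X₂, 𝕂) :=
    fun c₁ c₂ => ⟨Sum.elim (fun _ => c₁) (fun _ => c₂), hw c₁ c₂⟩ with hwdef
  have hTw : ∀ (c₁ c₂ : 𝕂) (x : X₁ ⊕ X₂) (hx : x ≠ Sum.inr (e 0)),
      T (w c₁ c₂) x = w c₁ c₂ x := by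
    intro c₁ c₂ x hx
    rw [hT (w c₁ c₂) ⟨x, hx⟩]
    cases x with
    | inl a =>
      obtain ⟨a', ha'⟩ := hφinl a hx
      rw [← ha']; rfl
    | inr b =>
      obtain ⟨b', hb'⟩ := hφinr b hx
      rw [← hb']; rfl
  have hwlin : ∀ c₁ c₂ : 𝕂, w c₁ c₂ = c₁ • w 1 0 + c₂ • w 0 1 := by
    intro c₁ c₂
    ext x
    cases x <;> simp [hwdef]
  set c := T (w 1 0) (Sum.inr (e 0)) with hc
  set d := T (w 0 1) (Sum.inr (e 0)) with hd
  have hfix : ∀ c₁ c₂ : 𝕂, c₁ * c + c₂ * d = c₂ → T (w c₁ c₂) = w c₁ c₂ := by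
    intro c₁ c₂ hsol
    ext x
    by_cases hx : x = Sum.inr (e 0)
    · subst hx
      have h6 : T (w c₁ c₂) = c₁ • T (w 1 0) + c₂ • T (w 0 1) := by
        rw [hwlin c₁ c₂, map_add, map_smul, map_smul]
      rw [h6]
      simp only [ContinuousMap.add_apply, ContinuousMap.smul_apply, smul_eq_mul]
      rw [← hc, ← hd, hsol]
      rfl
    · exact hTw c₁ c₂ x hx
  obtain ⟨f, hf0, hTf⟩ : ∃ f : C(X₁ ⊕ X₂, 𝕂), f ≠ 0 ∧ T f = f := by
    by_cases hcase : c = 0 ∧ d = 1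
    · refine ⟨w 0 1, ?_, hfix 0 1 (by rw [hcase.1, hcase.2]; ring)⟩
      intro h0
      have h7 := congrArg (fun g : C(X₁ ⊕ X₂, 𝕂) => g (Sum.inr (e 0))) h0
      simp [hwdef] at h7
    · refine ⟨w (1 - d) c, ?_, hfix (1 - d) c (by ring)⟩
      push_neg at hcase
      intro h0
      rcases ne_or_eq c 0 with hc0 | hc0
      · have h7 := congrArg (fun g : C(X₁ ⊕ X₂, 𝕂) => g (Sum.inr (e 0))) h0
        simp [hwdef] at h7
        exact hc0 h7
      · have hd1 := hcase hc0
        obtain ⟨a⟩ := ‹Nonempty X₁›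
        have h7 := congrArg (fun g : C(X₁ ⊕ X₂, 𝕂) => g (Sum.inl a)) h0
        simp [hwdef, sub_eq_zero] at h7
        exact hd1 h7.symm
  have hmem : f ∈ ⋂ m : ℕ, Set.range ((⇑T)^[m + 1]) := by
    rw [Set.mem_iInter]
    intro m
    exact ⟨f, Function.iterate_fixed hTf (m + 1)⟩
  have hne : (⋂ m : ℕ, Set.range ((⇑T)^[m + 1])) ≠ {0} := by
    intro h
    rw [h] at hmem
    exact hf0 hmem
  exact ⟨⟨f, hf0, hTf⟩, hne, fun hshift => hne hshift.2.2⟩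
end

section
/- Let W be a nonempty separable topological space which is homeomorphic to the countable product W^ℕ = (ℕ → W) with the product topology. Then there exists a homeomorphism φ : W → W which has a fixed point, whose set of periodic points is dense in W, and such that (W, φ) is totally transitive: there exists w ∈ W such that for every k ≥ 1 the set {(φ^k)ⁿ(w) : n ≥ 1} is dense in W. -/
/-!
Transport everything along `W ≃ₜ (ℕ → W) ≃ₜ (ℤ → W)` to the left shift `σ` of `ℤ → W`.
Constant sequences are fixed by `σ`, and periodic extensions of finite windows show that
periodic sequences are dense. For total transitivity, work first on `ℤ → ℕ` with `ℕ` discrete: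
there `σ` is topologically mixing and the space is Polish, so by Baire's theorem a generic point
has a dense `σᵏ`-orbit for every `k ≥ 1`. Composing with a dense sequence `ℕ → W` is a continuous
map with dense range that commutes with `σ`, so it carries such a point to one in `ℤ → W`.
-/

open Function Set Filter Topology TopologicalSpace

theorem exists_forall_dense_range_iterate {X ι : Type*} [TopologicalSpace X] [BaireSpace X]
    [SecondCountableTopology X] [Nonempty X] [Countable ι] (f : ι → X → X)
    (hf : ∀ i, Continuous (f i))
    (htrans : ∀ i (U V : Set X), IsOpen U → IsOpen V → U.Nonempty → V.Nonempty →
      ∃ n, (V ∩ (f i)^[n + 1] ⁻¹' U).Nonempty) :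
    ∃ x, ∀ i, Dense (range fun n => (f i)^[n + 1] x) := by
  obtain ⟨B, hBc, hB_empty, hB⟩ := exists_countable_basis X
  have := hBc.to_subtype
  let visits (p : ι × B) : Set X := ⋃ n, (f p.1)^[n + 1] ⁻¹' p.2
  have hopen (p : ι × B) : IsOpen (visits p) :=
    isOpen_iUnion fun n => (hB.isOpen p.2.2).preimage ((hf p.1).iterate _)
  have hdense (p : ι × B) : Dense (visits p) := by
    refine dense_iff_inter_open.2 fun V hV hVne => ?_
    have hne : (p.2 : Set X).Nonempty := nonempty_iff_ne_empty.2 fun h => hB_empty (h ▸ p.2.2)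
    obtain ⟨n, x, hxV, hxU⟩ := htrans p.1 p.2 V (hB.isOpen p.2.2) hV hne hVne
    exact ⟨x, hxV, mem_iUnion.2 ⟨n, hxU⟩⟩
  obtain ⟨x, hx⟩ := (dense_iInter_of_isOpen hopen hdense).nonempty
  refine ⟨x, fun i => hB.dense_iff.2 fun o ho _ => ?_⟩
  obtain ⟨n, hn⟩ := mem_iUnion.1 (mem_iInter.1 hx (i, ⟨o, ho⟩))
  exact ⟨_, hn, n, rfl⟩

theorem Function.Semiconj.dense_range_iterate {X Y : Type*} [TopologicalSpace X]
    [TopologicalSpace Y] {π : X → Y} {f : X → X} {g : Y → Y} (h : Semiconj π f g)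
    (hπ : DenseRange π) (hπc : Continuous π) {s : ℕ → ℕ} {x : X}
    (hx : Dense (range fun n => f^[s n] x)) : Dense (range fun n => g^[s n] (π x)) := by
  have := hπ.dense_image hπc hx
  rw [← range_comp] at this
  convert this using 3 with n
  exact ((h.iterate_right (s n)).eq x).symm

section LeftShift

variable {X : Type*} [TopologicalSpace X]

variable (X) in
def leftShift : (ℤ → X) ≃ₜ (ℤ → X) where
  toFun a j := a (j + 1)
  invFun a j := a (j - 1)
  left_inv a := funext fun j => by simp
  right_inv a := funext fun j => by simp
  continuous_toFun := continuous_pi fun j => continuous_apply _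
  continuous_invFun := continuous_pi fun j => continuous_apply _

theorem iterate_leftShift_apply (a : ℤ → X) (m : ℕ) (j : ℤ) :
    (⇑(leftShift X))^[m] a j = a (j + m) := by
  induction m generalizing a with
  | zero => simp
  | succ m ih =>
    rw [iterate_succ_apply, ih]
    simp only [leftShift, Homeomorph.homeomorph_mk_coe, Equiv.coe_fn_mk]
    push_cast
    ring_nf

theorem exists_forall_eqOn_Icc_mem {V : Set (ℤ → X)} (hV : IsOpen V) {a : ℤ → X} (ha : a ∈ V) :
    ∃ N : ℕ, ∀ c : ℤ → X, EqOn c a (Icc (-N) N) → c ∈ V := by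
  obtain ⟨I, u, hu, hsub⟩ := isOpen_pi_iff.1 hV a ha
  refine ⟨I.sup Int.natAbs, fun c hc => hsub fun j hj => ?_⟩
  have hj_le : j.natAbs ≤ I.sup Int.natAbs := Finset.le_sup hj
  rw [hc ⟨by omega, by omega⟩]
  exact (hu j hj).2

theorem dense_periodicPts_leftShift : Dense (periodicPts (leftShift X)) := by
  refine dense_iff_inter_open.2 fun U hU ⟨a, ha⟩ => ?_
  obtain ⟨N, hN⟩ := exists_forall_eqOn_Icc_mem hU ha
  let m : ℕ := 2 * N + 1
  refine ⟨fun j => a ((j + N) % m - N), hN _ fun j ⟨hj₁, hj₂⟩ => ?_, m, by positivity, ?_⟩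
  · simp only [Int.emod_eq_of_lt (by omega : 0 ≤ j + N) (by omega : j + N < m),
      add_sub_cancel_right]
  · funext j
    have hperiod : (j + m + N) % m = (j + N) % (m : ℤ) := by
      rw [add_right_comm, Int.add_emod_right]
    rw [iterate_leftShift_apply, hperiod]

theorem eventually_inter_preimage_iterate_leftShift_nonempty {U V : Set (ℤ → X)}
    (hU : IsOpen U) (hV : IsOpen V) (hUne : U.Nonempty) (hVne : V.Nonempty) :
    ∀ᶠ m in atTop, (V ∩ (⇑(leftShift X))^[m] ⁻¹' U).Nonempty := by
  obtain ⟨a, ha⟩ := hVne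
  obtain ⟨b, hb⟩ := hUne
  obtain ⟨N, hNa⟩ := exists_forall_eqOn_Icc_mem hV ha
  obtain ⟨M, hMb⟩ := exists_forall_eqOn_Icc_mem hU hb
  refine eventually_atTop.2 ⟨N + M + 1, fun m hm => ?_⟩
  refine ⟨fun j => if j ≤ N then a j else b (j - m), hNa _ fun j hj => if_pos hj.2,
    hMb _ fun j hj => ?_⟩
  have hj : ¬ j + m ≤ N := by have := hj.1; omega
  simp only [iterate_leftShift_apply, if_neg hj, add_sub_cancel_right]

theorem exists_dense_range_iterate_leftShift_nat :
    ∃ a : ℤ → ℕ, ∀ k, 0 < k → Dense (range fun n => (⇑(leftShift ℕ))^[k * (n + 1)] a) := by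
  obtain ⟨a, ha⟩ := exists_forall_dense_range_iterate (ι := {k : ℕ // 0 < k})
    (fun k => (⇑(leftShift ℕ))^[k]) (fun k => (leftShift ℕ).continuous.iterate k)
    fun k U V hU hV hUne hVne => by
      obtain ⟨M, hM⟩ :=
        eventually_atTop.1 (eventually_inter_preimage_iterate_leftShift_nonempty hU hV hUne hVne)
      exact ⟨M, by simpa only [← iterate_mul] using hM _ (by nlinarith [k.2])⟩
  exact ⟨a, fun k hk => by simpa only [iterate_mul] using ha ⟨k, hk⟩⟩

theorem exists_dense_range_iterate_leftShift [SeparableSpace X] [Nonempty X] :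
    ∃ w : ℤ → X, ∀ k, 0 < k → Dense (range fun n => (⇑(leftShift X))^[k * (n + 1)] w) := by
  obtain ⟨a, ha⟩ := exists_dense_range_iterate_leftShift_nat
  have hsemi : Semiconj (Pi.map fun _ => denseSeq X) (leftShift ℕ) (leftShift X) := fun _ => rfl
  have hcont : Continuous (Pi.map fun (_ : ℤ) => denseSeq X) :=
    continuous_pi fun j => continuous_of_discreteTopology.comp (continuous_apply j)
  exact ⟨_, fun k hk => hsemi.dense_range_iterate
    (DenseRange.piMap fun _ => denseRange_denseSeq X) hcont (ha k hk)⟩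

end LeftShift

/-- A nonempty separable space homeomorphic to its own countable power admits a totally
transitive homeomorphism with a fixed point and a dense set of periodic points. -/
theorem stmt14 (W : Type) [TopologicalSpace W] [Nonempty W]
    [TopologicalSpace.SeparableSpace W] (h : Nonempty (W ≃ₜ (ℕ → W))) :
    ∃ φ : W ≃ₜ W, (∃ x, φ x = x) ∧
      Dense {x : W | ∃ m : ℕ, 0 < m ∧ (⇑φ)^[m] x = x} ∧
      ∃ w : W, ∀ k : ℕ, 0 < k → Dense (Set.range fun n : ℕ => (⇑φ)^[k * (n + 1)] w) := by
  obtain ⟨e₀⟩ := h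
  let e : W ≃ₜ (ℤ → W) :=
    e₀.trans (Homeomorph.piCongrLeft (Y := fun _ => W) (Denumerable.eqv ℤ)).symm
  let φ : W ≃ₜ W := (e.trans (leftShift W)).trans e.symm
  have hconj : Semiconj e.symm (leftShift W) φ := fun a => by simp [φ]
  have hdense : DenseRange e.symm := e.symm.surjective.denseRange
  obtain ⟨w, hw⟩ := exists_dense_range_iterate_leftShift (X := W)
  refine ⟨φ, ⟨e.symm fun _ => Classical.arbitrary W, (hconj _).symm⟩, ?_, e.symm w,
    fun k hk => hconj.dense_range_iterate hdense e.symm.continuous (hw k hk)⟩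
  exact (hdense.dense_image e.symm.continuous dense_periodicPts_leftShift).mono
    hconj.mapsTo_periodicPts.image_subset
end

section
/- Let W be a nonempty separable topological space and let ι be a type whose cardinality κ satisfies ℵ₀ ≤ κ ≤ 𝔠. Then there exists a homeomorphism φ of the product space W^ι = (ι → W) (product topology) which has a fixed point, whose set of periodic points is dense in W^ι, and such that (W^ι, φ) is totally transitive. -/
/-!
Since `ℵ₀ ≤ #ι`, the power `Y = W^ι` is homeomorphic to `Y^ℤ`, and we take `φ` to be the
conjugate of the shift `σ` of `Y^ℤ`. Constant sequences are fixed, and sequences that are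
periodic in `ℤ` are periodic points, which are dense. Since `#ι ≤ 𝔠`, `Y` is separable
(Hewitt–Marczewski–Pondiczery: embed `ι` into the Cantor space `ℕ → Bool`, so that finitely
many indices are told apart by finite prefixes). Enumerating all pairs (step `k`, finite
pattern over a countable dense subset of `Y`), we glue the patterns into one sequence `w`,
placing the pattern with step `k` in a block centred at a positive multiple of `k`; blocks are
pairwise disjoint, so every `σ^k`-orbit of `w` meets every basic open set.
-/

open Function Set Filter

section Cylinders

variable {ι : Type*} {X : ι → Type*} [∀ i, TopologicalSpace (X i)]

theorem dense_of_forall_exists_mem_cylinder {S : Set (∀ i, X i)}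
    (h : ∀ (f : ∀ i, X i) (I : Finset ι) (u : ∀ i, Set (X i)),
      (∀ i ∈ I, IsOpen (u i) ∧ f i ∈ u i) → ∃ x ∈ S, ∀ i ∈ I, x i ∈ u i) :
    Dense S := by
  refine dense_iff_inter_open.2 fun U hU ⟨f, hf⟩ => ?_
  obtain ⟨I, u, hIu, hsub⟩ := isOpen_pi_iff.1 hU f hf
  obtain ⟨x, hxS, hxu⟩ := h f I u hIu
  exact ⟨x, hsub hxu, hxS⟩

end Cylinders

section Separable

theorem exists_injOn_prefix {ι : Type*} {j : ι → ℕ → Bool} (hj : Injective j) (I : Finset ι) :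
    ∃ N, InjOn (fun i (a : Fin N) => j i a) I := by
  have hev : ∀ᶠ N in atTop, ∀ p ∈ I ×ˢ I, p.1 ≠ p.2 →
      (fun a : Fin N => j p.1 a) ≠ fun a : Fin N => j p.2 a := by
    refine (eventually_all_finset _).2 fun ⟨i, i'⟩ _ => ?_
    by_cases hii' : i = i'
    · exact Eventually.of_forall fun _ h => (h hii').elim
    obtain ⟨a, ha⟩ : ∃ a, j i a ≠ j i' a := by
      by_contra! h
      exact hii' (hj (funext h))
    filter_upwards [eventually_gt_atTop a] with N hN _ heq
    exact ha (congrFun heq ⟨a, hN⟩)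
  obtain ⟨N, hN⟩ := hev.exists
  refine ⟨N, fun i hi i' hi' heq => ?_⟩
  by_contra hne
  exact hN (i, i') (Finset.mem_product.2 ⟨hi, hi'⟩) hne heq

theorem separableSpace_pi_of_mk_le_continuum {ι W : Type*} [TopologicalSpace W]
    [TopologicalSpace.SeparableSpace W] [Nonempty W] (h : Cardinal.mk ι ≤ Cardinal.continuum) :
    TopologicalSpace.SeparableSpace (ι → W) := by
  obtain ⟨j⟩ : Nonempty (ι ↪ (ℕ → Bool)) := Cardinal.lift_mk_le'.1 (by simpa using h)
  obtain ⟨dW, hdW⟩ := TopologicalSpace.exists_dense_seq W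
  refine TopologicalSpace.SeparableSpace.of_denseRange
    (fun p : Σ N, (Fin N → Bool) → ℕ => fun i => dW (p.2 fun a => j i a)) ?_
  refine dense_of_forall_exists_mem_cylinder fun f I u hu => ?_
  obtain ⟨N, hN⟩ := exists_injOn_prefix j.injective I
  set pre : ↥(I : Set ι) → Fin N → Bool := fun i b => j i b
  have hpre : Injective pre := injOn_iff_injective.1 hN
  choose a ha using fun i : ↥(I : Set ι) => hdW.exists_mem_open (hu i i.2).1 ⟨f i, (hu i i.2).2⟩
  refine ⟨_, ⟨⟨N, extend pre a fun _ => 0⟩, rfl⟩, fun i hi => ?_⟩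
  change dW (extend pre a (fun _ => 0) (pre ⟨i, hi⟩)) ∈ u i
  rw [hpre.extend_apply]
  exact ha ⟨i, hi⟩

end Separable

section Conjugacy

variable {X Y : Type*} [TopologicalSpace X] [TopologicalSpace Y]
  {fa : X → X} {fb : Y → Y} {g : X → Y}

def IsTotallyTransitivePt (f : X → X) (w : X) : Prop :=
  ∀ k : ℕ, 0 < k → Dense (range fun n : ℕ => f^[k * (n + 1)] w)

theorem Function.Semiconj.dense_periodicPts (h : Semiconj g fa fb) (hg : Continuous g)
    (hgd : DenseRange g) (hper : Dense (periodicPts fa)) : Dense (periodicPts fb) :=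
  (hgd.dense_image hg hper).mono h.mapsTo_periodicPts.image_subset

theorem Function.Semiconj.isTotallyTransitivePt (h : Semiconj g fa fb) (hg : Continuous g)
    (hgd : DenseRange g) {w : X} (hw : IsTotallyTransitivePt fa w) :
    IsTotallyTransitivePt fb (g w) := fun k hk => by
  have hrange : (range fun n : ℕ => fb^[k * (n + 1)] (g w)) =
      g '' range fun n : ℕ => fa^[k * (n + 1)] w := by
    rw [← range_comp]
    exact congrArg range (funext fun n => ((h.iterate_right _).eq w).symm)
  exact hrange ▸ hgd.dense_image hg (hw k hk)

theorem Homeomorph.semiconj_symm_trans (Ψ : X ≃ₜ Y) (σ : Y ≃ₜ Y) :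
    Semiconj Ψ.symm σ (Ψ.trans (σ.trans Ψ.symm)) := fun y => by simp

end Conjugacy

section Shift

variable (X : Type*) [TopologicalSpace X]

def shift : (ℤ → X) ≃ₜ (ℤ → X) :=
  (Homeomorph.piCongrLeft (Y := fun _ => X) (Equiv.addRight 1)).symm

variable {X}

theorem shift_iterate_apply (m : ℕ) (f : ℤ → X) (n : ℤ) : (shift X)^[m] f n = f (n + m) := by
  induction m generalizing n with
  | zero => simp
  | succ m ih =>
    rw [iterate_succ_apply']
    change ((shift X)^[m] f) (n + 1) = _
    rw [ih]
    push_cast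
    ring_nf

theorem isFixedPt_shift_const (y : X) : IsFixedPt (shift X) fun _ => y := rfl

theorem dense_periodicPts_shift : Dense (periodicPts (shift X)) := by
  refine dense_of_forall_exists_mem_cylinder fun f I u hu => ?_
  set L : ℕ := I.sup Int.natAbs
  refine ⟨fun n => f ((n + L) % (2 * L + 1) - L), ⟨2 * L + 1, by omega, ?_⟩, fun i hi => ?_⟩
  · funext n
    simp [shift_iterate_apply, add_right_comm n]
  · have : i.natAbs ≤ L := Finset.le_sup (f := Int.natAbs) hi
    dsimp only
    rw [Int.emod_eq_of_lt (by omega) (by omega), add_sub_cancel_right]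
    exact (hu i hi).2

end Shift

section Blocks

theorem exists_eq_on_blocks {X : Type*} [Nonempty X] (c : ℕ → ℤ) (R : ℕ → ℕ)
    (hsep : ∀ s t, s < t → c s + R s < c t - R t) (P : ℕ → ℤ → X) :
    ∃ w : ℤ → X, ∀ t, ∀ i : ℤ, |i| ≤ R t → w (c t + i) = P t i := by
  classical
  have huniq : ∀ x s t, |x - c s| ≤ R s → |x - c t| ≤ R t → s = t := by
    intro x s t hs ht
    rw [abs_le] at hs ht
    rcases lt_trichotomy s t with hst | rfl | hts
    · linarith [hsep s t hst]
    · rfl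
    · linarith [hsep t s hts]
  refine ⟨fun x => if h : ∃ t, |x - c t| ≤ R t then P h.choose (x - c h.choose)
    else Classical.arbitrary X, fun t i hi => ?_⟩
  have h : ∃ s, |c t + i - c s| ≤ R s := ⟨t, by simpa using hi⟩
  dsimp only
  rw [dif_pos h, huniq _ _ t h.choose_spec (by simpa using hi), add_sub_cancel_left]

variable (k R : ℕ → ℕ)

def blockCenter : ℕ → ℕ
  | 0 => (k 0 + 1) * (R 0 + 1)
  | t + 1 => (k (t + 1) + 1) * (blockCenter t + R t + R (t + 1) + 1)

theorem exists_blockCenter_eq_mul (t : ℕ) : ∃ n, blockCenter k R t = (k t + 1) * (n + 1) := by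
  cases t with
  | zero => exact ⟨R 0, rfl⟩
  | succ t => exact ⟨_, rfl⟩

theorem blockCenter_add_lt_succ (t : ℕ) :
    blockCenter k R t + R t + R (t + 1) < blockCenter k R (t + 1) :=
  Nat.lt_of_lt_of_le (Nat.lt_succ_self _) (Nat.le_mul_of_pos_left _ (Nat.succ_pos _))

theorem blockCenter_add_lt {s t : ℕ} (hst : s < t) :
    blockCenter k R s + R s + R t < blockCenter k R t := by
  induction t, hst using Nat.le_induction with
  | base => exact blockCenter_add_lt_succ k R s
  | succ t _ ih => have := blockCenter_add_lt_succ k R t; omega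

theorem exists_block_centers : ∃ c : ℕ → ℕ, (∀ t, ∃ n, c t = (k t + 1) * (n + 1)) ∧
    ∀ s t, s < t → c s + R s + R t < c t :=
  ⟨blockCenter k R, exists_blockCenter_eq_mul k R, fun _ _ => blockCenter_add_lt k R⟩

end Blocks

theorem exists_isTotallyTransitivePt_shift (X : Type*) [TopologicalSpace X]
    [TopologicalSpace.SeparableSpace X] [Nonempty X] :
    ∃ w : ℤ → X, IsTotallyTransitivePt (shift X) w := by
  obtain ⟨d, hd⟩ := TopologicalSpace.exists_dense_seq X
  obtain ⟨F, hF⟩ := exists_surjective_nat (ℕ × ℕ × (ℤ →₀ ℕ))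
  obtain ⟨c, hc_mul, hc_sep⟩ := exists_block_centers (fun t => (F t).1) (fun t => (F t).2.1)
  have hsep : ∀ s t, s < t → (c s : ℤ) + (F s).2.1 < c t - (F t).2.1 := fun s t hst => by
    have := hc_sep s t hst
    omega
  obtain ⟨w, hw⟩ := exists_eq_on_blocks (fun t => (c t : ℤ)) (fun t => (F t).2.1) hsep
    fun t i => d ((F t).2.2 i)
  refine ⟨w, fun k hk => dense_of_forall_exists_mem_cylinder fun f I u hu => ?_⟩
  choose a ha using fun i (hi : i ∈ I) => hd.exists_mem_open (hu i hi).1 ⟨f i, (hu i hi).2⟩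
  obtain ⟨t, ht⟩ := hF (k - 1, I.sup Int.natAbs, Finsupp.indicator I a)
  obtain ⟨n, hn⟩ := hc_mul t
  have hc : c t = k * (n + 1) := by rw [hn, ht, Nat.sub_add_cancel hk]
  refine ⟨_, ⟨n, rfl⟩, fun i hi => ?_⟩
  have hiR : |i| ≤ (F t).2.1 := by
    rw [ht, Int.abs_eq_natAbs, Nat.cast_le]
    exact Finset.le_sup (f := Int.natAbs) hi
  dsimp only
  rw [shift_iterate_apply, ← hc, add_comm, hw t i hiR, ht,
    Finsupp.indicator_of_mem hi]
  exact ha i hi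

/-- For a nonempty separable space `W` and a type `ι` with `ℵ₀ ≤ card ι ≤ 𝔠`, the power
`W^ι` admits a totally transitive homeomorphism with a fixed point and a dense set of
periodic points. -/
theorem stmt15 (W : Type) [TopologicalSpace W] [Nonempty W]
    [TopologicalSpace.SeparableSpace W] (ι : Type)
    (hι1 : Cardinal.aleph0 ≤ Cardinal.mk ι) (hι2 : Cardinal.mk ι ≤ Cardinal.continuum) :
    ∃ φ : (ι → W) ≃ₜ (ι → W), (∃ x, φ x = x) ∧
      Dense {x : ι → W | ∃ m : ℕ, 0 < m ∧ (⇑φ)^[m] x = x} ∧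
      ∃ w : ι → W, ∀ k : ℕ, 0 < k →
        Dense (Set.range fun n : ℕ => (⇑φ)^[k * (n + 1)] w) := by
  have := separableSpace_pi_of_mk_le_continuum (W := W) hι2
  obtain ⟨e⟩ : Nonempty (ℤ × ι ≃ ι) :=
    Cardinal.eq.1 (by simp [Cardinal.aleph0_mul_eq hι1])
  let Ψ : (ι → W) ≃ₜ (ℤ → ι → W) := (Homeomorph.piCongrLeft e).symm.trans Homeomorph.piCurry
  have hconj := Ψ.semiconj_symm_trans (shift _)
  obtain ⟨w, hw⟩ := exists_isTotallyTransitivePt_shift (ι → W)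
  exact ⟨_, ⟨_, (isFixedPt_shift_const (Classical.arbitrary _)).map hconj⟩,
    hconj.dense_periodicPts Ψ.symm.continuous Ψ.symm.surjective.denseRange dense_periodicPts_shift,
    _, hconj.isTotallyTransitivePt Ψ.symm.continuous Ψ.symm.surjective.denseRange hw⟩
end

section
/- Let Φ := (√5 − 1)/2 (the golden ratio conjugate). Let f : ℝ → ℝ be a Lebesgue-measurable bounded function which is periodic with period 2π. If ∫_α^{α+2πΦ} f(t) dt = 0 for every α ∈ ℝ, then f = 0 almost everywhere with respect to Lebesgue measure. -/
set_option maxHeartbeats 1000000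

open Topology

open MeasureTheory intervalIntegral in
/-- If a bounded measurable `2π`-periodic function on `ℝ` has vanishing integral over
every interval of length `2πΦ`, where `Φ = (√5 − 1)/2` is the golden ratio conjugate,
then it vanishes almost everywhere. -/
theorem stmt19 (f : ℝ → ℝ) (hmeas : Measurable f) (hbd : ∃ C : ℝ, ∀ t, |f t| ≤ C)
    (hper : Function.Periodic f (2 * Real.pi))
    (hint : ∀ α : ℝ,
      ∫ t in α..(α + 2 * Real.pi * ((Real.sqrt 5 - 1) / 2)), f t = 0) :
    f =ᵐ[volume] 0 := by
  obtain ⟨C₀, hC₀⟩ := hbd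
  set C : ℝ := max C₀ 0 with hCdef
  have hC : ∀ t, |f t| ≤ C := fun t => (hC₀ t).trans (le_max_left _ _)
  have hC0 : 0 ≤ C := le_max_right _ _
  set T : ℝ := 2 * Real.pi with hTdef
  set Φ : ℝ := (Real.sqrt 5 - 1) / 2 with hΦdef
  have h5 : Real.sqrt 5 ^ 2 = 5 := Real.sq_sqrt (by norm_num)
  have h5lt : Real.sqrt 5 < 3 := by nlinarith [Real.sqrt_nonneg 5]
  have h5gt : 1 < Real.sqrt 5 := by nlinarith [Real.sqrt_nonneg 5]
  have hΦpos : 0 < Φ := by rw [hΦdef]; linarith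
  have hΦlt : Φ < 1 := by rw [hΦdef]; linarith
  have hΦsq : Φ ^ 2 = 1 - Φ := by rw [hΦdef]; field_simp; nlinarith
  have hTpos : 0 < T := by rw [hTdef]; positivity
  -- interval integrability
  have hInt : ∀ a b : ℝ, IntervalIntegrable f volume a b := by
    intro a b
    refine (_root_.intervalIntegrable_const (c := C) (μ := volume) (a := a) (b := b)).mono_fun
      hmeas.aestronglyMeasurable ?_
    filter_upwards with t
    simpa [Real.norm_eq_abs, abs_of_nonneg hC0] using hC t
  set F : ℝ → ℝ := fun x => ∫ t in (0:ℝ)..x, f t with hFdef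
  have hFsub : ∀ a b : ℝ, F b - F a = ∫ t in a..b, f t := by
    intro a b
    have := integral_add_adjacent_intervals (hInt 0 a) (hInt a b)
    simp only [hFdef]; linarith [this]
  have hlip : ∀ a b : ℝ, |F b - F a| ≤ C * |b - a| := by
    intro a b
    rw [hFsub a b]
    have := intervalIntegral.norm_integral_le_of_norm_le_const
      (C := C) (f := f) (a := a) (b := b) ?_
    · simpa [Real.norm_eq_abs] using this
    · intro t _; simpa [Real.norm_eq_abs] using hC t
  have hF0 : F 0 = 0 := by simp [hFdef]
  have hΦstep : ∀ x : ℝ, F (x + T * Φ) = F x := by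
    intro x
    have := hFsub x (x + T * Φ)
    rw [hint x] at this
    linarith
  set I : ℝ := ∫ t in (0:ℝ)..T, f t with hIdef
  have hTstep : ∀ x : ℝ, F (x + T) = F x + I := by
    intro x
    have h1 := hFsub x (x + T)
    rw [hper.intervalIntegral_add_eq x 0, zero_add, ← hIdef] at h1
    linarith
  -- F (T * (m * Φ)) = 0
  have hFmΦ : ∀ m : ℕ, F (T * (m * Φ)) = 0 := by
    intro m
    induction m with
    | zero => simpa using hF0
    | succ n ih =>
      have h : T * (((n : ℕ) + 1 : ℕ) * Φ) = T * (n * Φ) + T * Φ := by push_cast; ring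
      rw [h, hΦstep, ih]
  have hFnT : ∀ (x : ℝ) (n : ℕ), F (x + n * T) = F x + n * I := by
    intro x n
    induction n with
    | zero => simp
    | succ k ih =>
      have h : x + ((k + 1 : ℕ) : ℝ) * T = (x + k * T) + T := by push_cast; ring
      rw [h, hTstep, ih]; push_cast; ring
  -- I = 0
  have hI : I = 0 := by
    by_contra hne
    have hIabs : 0 < |I| := abs_pos.mpr hne
    have key : ∀ m : ℕ, (⌊(m : ℝ) * Φ⌋₊ : ℝ) * |I| ≤ C * T := by
      intro m
      set n : ℕ := ⌊(m : ℝ) * Φ⌋₊ with hn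
      set r : ℝ := T * ((m : ℝ) * Φ - n) with hr
      have hfloor_le : (n : ℝ) ≤ (m : ℝ) * Φ := Nat.floor_le (by positivity)
      have hlt : (m : ℝ) * Φ - n < 1 := by
        have := Nat.lt_floor_add_one ((m : ℝ) * Φ); linarith
      have heq : T * ((m : ℝ) * Φ) = r + n * T := by rw [hr]; ring
      have h0 : F r + n * I = 0 := by rw [← hFnT, ← heq, hFmΦ]
      have hFr : |F r| ≤ C * T := by
        have h1 := hlip 0 r
        rw [hF0, sub_zero, sub_zero] at h1
        have hrbd : |r| ≤ T := by
          rw [hr, abs_of_nonneg (by nlinarith)]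
          nlinarith
        calc |F r| ≤ C * |r| := h1
          _ ≤ C * T := by nlinarith
      calc (n : ℝ) * |I| = |(n : ℝ) * I| := by
            rw [abs_mul, Nat.abs_cast]
        _ = |F r| := by rw [show (n : ℝ) * I = -F r by linarith, abs_neg]
        _ ≤ C * T := hFr
    -- find m with floor large
    set N : ℕ := ⌈C * T / |I|⌉₊ + 1 with hN
    set m : ℕ := ⌈(N : ℝ) / Φ⌉₊ with hm
    have hmΦ : (N : ℝ) ≤ (m : ℝ) * Φ := by
      have h1 : (N : ℝ) / Φ ≤ m := Nat.le_ceil _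
      calc (N : ℝ) = ((N : ℝ) / Φ) * Φ := by field_simp
        _ ≤ (m : ℝ) * Φ := by nlinarith
    have hNle : (N : ℕ) ≤ ⌊(m : ℝ) * Φ⌋₊ := Nat.le_floor hmΦ
    have hNgt : C * T / |I| < (N : ℝ) := by
      have := Nat.le_ceil (C * T / |I|)
      rw [hN]; push_cast; linarith
    have h2 : C * T < (N : ℝ) * |I| := by
      rw [div_lt_iff₀ hIabs] at hNgt; linarith
    have h3 := key m
    have h4 : (N : ℝ) ≤ (⌊(m : ℝ) * Φ⌋₊ : ℝ) := by exact_mod_cast hNle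
    linarith [mul_le_mul_of_nonneg_right h4 hIabs.le]
  -- F has period T * Φ ^ n for every n
  have hperiod : ∀ n : ℕ,
      (∀ x, F (x + T * Φ ^ n) = F x) ∧ (∀ x, F (x + T * Φ ^ (n + 1)) = F x) := by
    intro n
    induction n with
    | zero =>
      constructor
      · intro x; have := hTstep x; rw [hI, add_zero] at this; simpa using this
      · intro x; simpa using hΦstep x
    | succ k ih =>
      refine ⟨ih.2, ?_⟩
      intro x
      have hpow : T * Φ ^ (k + 2) = T * Φ ^ k - T * Φ ^ (k + 1) := by
        have h : Φ ^ (k + 2) = Φ ^ k - Φ ^ (k + 1) := by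
          calc Φ ^ (k + 2) = Φ ^ k * Φ ^ 2 := by ring
            _ = Φ ^ k * (1 - Φ) := by rw [hΦsq]
            _ = Φ ^ k - Φ ^ (k + 1) := by ring
        rw [h]; ring
      have h1 := ih.1 (x - T * Φ ^ (k + 1))
      have h2 := ih.2 (x - T * Φ ^ (k + 1))
      have e1 : x + (T * Φ ^ k - T * Φ ^ (k + 1)) = (x - T * Φ ^ (k + 1)) + T * Φ ^ k := by
        ring
      have e2 : (x - T * Φ ^ (k + 1)) + T * Φ ^ (k + 1) = x := by ring
      rw [hpow, e1, h1, ← h2, e2]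
  -- F vanishes everywhere
  have hFzero : ∀ x : ℝ, F x = 0 := by
    intro x
    have hbound : ∀ n : ℕ, |F x| ≤ C * T * Φ ^ n := by
      intro n
      set p : ℝ := T * Φ ^ n with hp
      have hppos : 0 < p := by rw [hp]; positivity
      have hFper : Function.Periodic F p := fun y => (hperiod n).1 y
      set k : ℤ := ⌊x / p⌋ with hk
      have hksub : F (x - (k : ℝ) * p) = F x := hFper.sub_int_mul_eq k
      have h1 : 0 ≤ x - (k : ℝ) * p := by
        have h := Int.floor_le (x / p)
        rw [← hk] at h
        have := (le_div_iff₀ hppos).mp h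
        linarith
      have h2 : x - (k : ℝ) * p ≤ p := by
        have h := Int.lt_floor_add_one (x / p)
        rw [← hk] at h
        have := (div_lt_iff₀ hppos).mp h
        nlinarith
      have h3 := hlip 0 (x - (k : ℝ) * p)
      rw [hF0, sub_zero, sub_zero, hksub, abs_of_nonneg h1] at h3
      calc |F x| ≤ C * (x - (k : ℝ) * p) := h3
        _ ≤ C * p := mul_le_mul_of_nonneg_left h2 hC0
        _ = C * T * Φ ^ n := by rw [hp]; ring
    have htend : Filter.Tendsto (fun n : ℕ => C * T * Φ ^ n) Filter.atTop (𝓝 0) := by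
      have h := tendsto_pow_atTop_nhds_zero_of_lt_one hΦpos.le hΦlt
      simpa using h.const_mul (C * T)
    have hle : |F x| ≤ 0 :=
      le_of_tendsto_of_tendsto' tendsto_const_nhds htend hbound
    exact abs_nonpos_iff.mp hle
  have hintzero : ∀ a b : ℝ, ∫ t in a..b, f t = 0 := by
    intro a b
    rw [← hFsub, hFzero, hFzero, sub_zero]
  -- Lebesgue differentiation
  have hloc : LocallyIntegrable f volume := by
    intro x
    refine ⟨Metric.closedBall x 1, Metric.closedBall_mem_nhds x one_pos, ?_⟩
    refine Integrable.mono' (g := fun _ => C)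
      (integrableOn_const measure_closedBall_lt_top.ne)
      hmeas.aestronglyMeasurable ?_
    filter_upwards with t
    simpa [Real.norm_eq_abs] using hC t
  have hdiff := IsUnifLocDoublingMeasure.ae_tendsto_average (μ := volume) hloc 1
  filter_upwards [hdiff] with x hx
  have hδ : Filter.Tendsto (fun j : ℕ => (1 : ℝ) / (j + 1)) Filter.atTop (𝓝[>] 0) := by
    apply tendsto_nhdsWithin_of_tendsto_nhds_of_eventually_within
    · exact tendsto_one_div_add_atTop_nhds_zero_nat
    · filter_upwards with j
      have : (0:ℝ) < (j:ℝ) + 1 := by positivity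
      exact Set.mem_Ioi.mpr (by positivity)
  have hmem : ∀ᶠ j : ℕ in Filter.atTop,
      x ∈ Metric.closedBall x (1 * ((1 : ℝ) / (j + 1))) := by
    filter_upwards with j
    have : (0:ℝ) ≤ 1 * ((1 : ℝ) / (j + 1)) := by positivity
    simpa [Metric.mem_closedBall, dist_self] using this
  have h1 := hx (fun _ : ℕ => x) (fun j : ℕ => (1 : ℝ) / (j + 1)) hδ hmem
  have h2 : ∀ j : ℕ, (⨍ y in Metric.closedBall x ((1 : ℝ) / (j + 1)), f y) = 0 := by
    intro j
    have hle : x - (1 : ℝ) / (j + 1) ≤ x + (1 : ℝ) / (j + 1) := by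
      have : (0:ℝ) ≤ (1 : ℝ) / (j + 1) := by positivity
      linarith
    have hiz : ∫ y in Metric.closedBall x ((1 : ℝ) / (j + 1)), f y = 0 := by
      rw [Real.closedBall_eq_Icc, MeasureTheory.integral_Icc_eq_integral_Ioc,
        ← intervalIntegral.integral_of_le hle, hintzero]
    rw [setAverage_eq, hiz, smul_zero]
  have h3 : Filter.Tendsto (fun _ : ℕ => (0 : ℝ)) Filter.atTop (𝓝 (f x)) := by
    have := h1
    simp only [h2] at this
    exact this
  have : f x = 0 := (tendsto_nhds_unique h3 tendsto_const_nhds).symm ▸ rfl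
  simpa using this
end
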